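/- Let K ≥ 1, n ≥ 1, let F be a K×n real matrix with strictly positive entries whose columns each lie in Δ_K, let z ∈ Δ_K have strictly positive entries, let 0 < α < 1 and ε > 0, and set C = -log F entrywise, M = F^{1/ε} entrywise and τ = (1 + αε/(1-α))^{-1}. Suppose a ∈ ℝ^K and b ∈ ℝ^n have strictly positive entries and satisfy a = (n z ⊘ (M b))^τ and b = 1_n ⊘ (Mᵀ a) entrywise. Then the matrix U = diag(a)·M·diag(b) has strictly positive entries, each column of U lies in Δ_K, and U is the minimizer over all nonnegative K×n matrices with columns in Δ_K of the objective G(U) = (α/n)(⟨C,U⟩ - ε H(U)) + (1-α) KL(U·1_n/n ∣ z). -/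

import Mathlib

/-- Frobenius inner product of two `K × n` real matrices. -/
noncomputable def frob {K n : ℕ} (C U : Fin K → Fin n → ℝ) : ℝ :=
  ∑ i, ∑ j, C i j * U i j

/-- Entropy of a nonnegative matrix, `H(U) = -∑ U_ij (log U_ij - 1)`
(the convention `0 · (log 0 - 1) = 0` holds since `Real.log 0 = 0`). -/
noncomputable def matEnt {K n : ℕ} (U : Fin K → Fin n → ℝ) : ℝ :=
  -∑ i, ∑ j, U i j * (Real.log (U i j) - 1)

/-- Generalized Kullback-Leibler divergence between nonnegative vectors. -/
noncomputable def klv {K : ℕ} (a b : Fin K → ℝ) : ℝ :=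
  ∑ i, (a i * Real.log (a i / b i) - a i + b i)

/-- `G(U) = (α/n)(⟨C,U⟩ - ε H(U)) + (1-α) KL(U·1_n/n ∣ z)`. -/
noncomputable def objG {K n : ℕ} (C : Fin K → Fin n → ℝ) (z : Fin K → ℝ) (α ε : ℝ)
    (U : Fin K → Fin n → ℝ) : ℝ :=
  α / n * (frob C U - ε * matEnt U) + (1 - α) * klv (fun i => (∑ j, U i j) / n) z

/-- `U` is a nonnegative matrix each of whose columns lies in the simplex `Δ_K`. -/
def colSimplex {K n : ℕ} (U : Fin K → Fin n → ℝ) : Prop :=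
  (∀ i j, 0 ≤ U i j) ∧ ∀ j, ∑ i, U i j = 1

/-!
On nonnegative matrices `G` is convex: `⟨C, U⟩` is linear, `-H` is strictly convex by the
tangent-line inequality for `x (log x - 1)`, and the KL term is a convex function of the row
sums. Hence `G V > G U + ⟨∇G(U), V - U⟩` for every nonnegative `V ≠ U` when `U` is positive.
Taking logarithms in the fixed-point equations gives `∂G/∂U_ij = (αε/n) log b_j`: the exponent
`τ` is exactly what makes the row-sum term cancel the `log a_i` coming from the entropy. So the
gradient is constant along columns, `⟨∇G(U), V - U⟩ = 0` whenever `V` and `U` have the same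
column sums, and `U` is the strict minimizer.
-/

open Finset Real

lemma mul_log_div_eq_mul_log_sub {x y : ℝ} (hy : y ≠ 0) :
    x * log (x / y) = x * log x - x * log y := by
  rcases eq_or_ne x 0 with rfl | hx
  · simp
  · rw [log_div hx hy, mul_sub]

lemma mul_log_sub_one_tangent_lt {u t : ℝ} (hu : 0 ≤ u) (ht : 0 < t) (hne : u ≠ t) :
    t * (log t - 1) + log t * (u - t) < u * (log u - 1) := by
  have h := mul_lt_mul_of_pos_left
    (self_sub_one_lt_mul_log (div_nonneg hu ht.le) (div_ne_one_of_ne hne)) ht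
  have hu' : t * (u / t) = u := mul_div_cancel₀ u ht.ne'
  rw [mul_sub, mul_one, hu', ← mul_assoc, hu', mul_log_div_eq_mul_log_sub ht.ne'] at h
  linarith

lemma mul_log_sub_one_tangent_le {u t : ℝ} (hu : 0 ≤ u) (ht : 0 < t) :
    t * (log t - 1) + log t * (u - t) ≤ u * (log u - 1) := by
  rcases eq_or_ne u t with rfl | hne
  · simp
  · exact (mul_log_sub_one_tangent_lt hu ht hne).le

lemma sum_sum_mul_sub_eq_zero {ι κ R : Type*} [Fintype ι] [Fintype κ] [CommRing R]
    {g U V : ι → κ → R} (β : κ → R) (hg : ∀ i j, g i j = β j)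
    (hcol : ∀ j, ∑ i, V i j = ∑ i, U i j) :
    ∑ i, ∑ j, g i j * (V i j - U i j) = 0 := by
  rw [sum_comm]
  refine sum_eq_zero fun j _ => ?_
  simp only [hg, ← mul_sum, sum_sub_distrib, hcol, sub_self, mul_zero]

lemma sum_mul_mul_eq_one_of_eq_inv {ι κ 𝕜 : Type*} [Fintype ι] [Field 𝕜] {M : ι → κ → 𝕜}
    {a : ι → 𝕜} {b : κ → 𝕜} {j : κ} (hb0 : b j ≠ 0) (hb : b j = (∑ i, M i j * a i)⁻¹) :
    ∑ i, a i * M i j * b j = 1 := by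
  have hS : ∑ i, M i j * a i ≠ 0 := fun h => hb0 (by rw [hb, h, inv_zero])
  simp_rw [← sum_mul, mul_comm (a _)]
  rw [hb]
  exact mul_inv_cancel₀ hS

lemma log_mul_div_eq_of_eq_rpow {a T w τ : ℝ} (hw : 0 < w) (hT : 0 < T) (hτ : τ ≠ 0)
    (ha : a = (w / T) ^ τ) : log (a * T / w) = (1 - τ⁻¹) * log a := by
  have ha0 : 0 < a := ha ▸ rpow_pos_of_pos (div_pos hw hT) τ
  have hlog : log a = τ * (log w - log T) := by
    rw [ha, log_rpow (div_pos hw hT), log_div hw.ne' hT.ne']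
  rw [log_div (mul_pos ha0 hT).ne' hw.ne', log_mul ha0.ne' hT.ne', hlog]
  field_simp
  ring

section Objective

variable {K n : ℕ}

lemma neg_matEnt_add_sum_log_mul_sub_lt {U V : Fin K → Fin n → ℝ} (hU : ∀ i j, 0 < U i j)
    (hV : ∀ i j, 0 ≤ V i j) (hne : V ≠ U) :
    -matEnt U + ∑ i, ∑ j, log (U i j) * (V i j - U i j) < -matEnt V := by
  obtain ⟨i₀, hi₀⟩ := Function.ne_iff.mp hne
  obtain ⟨j₀, hj₀⟩ := Function.ne_iff.mp hi₀
  have hle i j := mul_log_sub_one_tangent_le (hV i j) (hU i j)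
  simp only [matEnt, neg_neg, ← sum_add_distrib]
  have hlt := mul_log_sub_one_tangent_lt (hV i₀ j₀) (hU i₀ j₀) hj₀
  exact sum_lt_sum (fun i _ => sum_le_sum fun j _ => hle i j)
    ⟨i₀, mem_univ _, sum_lt_sum (fun j _ => hle i₀ j) ⟨j₀, mem_univ _, hlt⟩⟩

lemma klv_add_sum_log_div_mul_sub_le {p q z : Fin K → ℝ} (hp : ∀ i, 0 ≤ p i)
    (hq : ∀ i, 0 < q i) (hz : ∀ i, 0 < z i) :
    klv q z + ∑ i, log (q i / z i) * (p i - q i) ≤ klv p z := by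
  simp only [klv, ← sum_add_distrib]
  refine sum_le_sum fun i _ => ?_
  have h := mul_log_sub_one_tangent_le (hp i) (hq i)
  rw [mul_log_div_eq_mul_log_sub (hz i).ne', mul_log_div_eq_mul_log_sub (hz i).ne',
    log_div (hq i).ne' (hz i).ne']
  linarith

noncomputable def objGrad (C : Fin K → Fin n → ℝ) (z : Fin K → ℝ) (α ε : ℝ)
    (U : Fin K → Fin n → ℝ) (i : Fin K) (j : Fin n) : ℝ :=
  α / n * (C i j + ε * log (U i j)) + (1 - α) / n * log ((∑ j', U i j') / n / z i)

lemma sum_objGrad_mul_sub (C : Fin K → Fin n → ℝ) (z : Fin K → ℝ) (α ε : ℝ)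
    (U V : Fin K → Fin n → ℝ) :
    ∑ i, ∑ j, objGrad C z α ε U i j * (V i j - U i j) =
      α / n * (frob C V - frob C U + ε * ∑ i, ∑ j, log (U i j) * (V i j - U i j)) +
        (1 - α) * ∑ i, log ((∑ j, U i j) / n / z i) *
          ((∑ j, V i j) / n - (∑ j, U i j) / n) := by
  simp only [frob, objGrad, ← sum_sub_distrib, ← sub_div, sum_div, mul_sum, ← sum_add_distrib]
  refine sum_congr rfl fun i _ => sum_congr rfl fun j _ => ?_
  ring

lemma objG_add_sum_objGrad_mul_sub_lt {C : Fin K → Fin n → ℝ} {z : Fin K → ℝ} {α ε : ℝ}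
    {U V : Fin K → Fin n → ℝ} (hα0 : 0 < α) (hα1 : α ≤ 1) (hε : 0 < ε) (hz : ∀ i, 0 < z i)
    (hU : ∀ i j, 0 < U i j) (hV : ∀ i j, 0 ≤ V i j) (hne : V ≠ U) :
    objG C z α ε U + ∑ i, ∑ j, objGrad C z α ε U i j * (V i j - U i j) < objG C z α ε V := by
  obtain ⟨_, hi₀⟩ := Function.ne_iff.mp hne
  obtain ⟨j₀, -⟩ := Function.ne_iff.mp hi₀
  have hn : (0 : ℝ) < n := by exact_mod_cast j₀.pos
  have hent := mul_lt_mul_of_pos_left (neg_matEnt_add_sum_log_mul_sub_lt hU hV hne)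
    (by positivity : 0 < α / n * ε)
  have hkl := mul_le_mul_of_nonneg_left
    (klv_add_sum_log_div_mul_sub_le (p := fun i => (∑ j, V i j) / n)
      (q := fun i => (∑ j, U i j) / n)
      (fun i => div_nonneg (sum_nonneg fun j _ => hV i j) hn.le)
      (fun i => div_pos (sum_pos (fun j _ => hU i j) ⟨j₀, mem_univ _⟩) hn) hz)
    (sub_nonneg.2 hα1)
  rw [sum_objGrad_mul_sub]
  simp only [objG] at hkl ⊢
  linarith

end Objective

section Sinkhorn

variable {K n : ℕ} {F C M U : Fin K → Fin n → ℝ} {z a : Fin K → ℝ} {b : Fin n → ℝ}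
  {α ε τ : ℝ}

lemma objGrad_eq_of_sinkhorn (hFpos : ∀ i j, 0 < F i j) (hzpos : ∀ i, 0 < z i)
    (hα0 : 0 < α) (hα1 : α < 1) (hε : 0 < ε)
    (hC : ∀ i j, C i j = -log (F i j)) (hM : ∀ i j, M i j = F i j ^ (1 / ε))
    (hτ : τ = (1 + α * ε / (1 - α))⁻¹) (hapos : ∀ i, 0 < a i) (hbpos : ∀ j, 0 < b j)
    (ha : ∀ i, a i = ((n : ℝ) * z i / (∑ j, M i j * b j)) ^ τ)
    (hU : ∀ i j, U i j = a i * M i j * b j) (i : Fin K) (j : Fin n) :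
    objGrad C z α ε U i j = α * ε / n * log (b j) := by
  have hn : (0 : ℝ) < n := by exact_mod_cast j.pos
  have hMpos i j : 0 < M i j := hM i j ▸ rpow_pos_of_pos (hFpos i j) _
  have hT : 0 < ∑ j, M i j * b j :=
    sum_pos (fun j _ => mul_pos (hMpos i j) (hbpos j)) ⟨j, mem_univ _⟩
  have h1α : 0 < 1 - α := sub_pos.2 hα1
  have hτ0 : τ ≠ 0 := by
    have := div_pos (mul_pos hα0 hε) h1α
    rw [hτ]
    exact inv_ne_zero (by linarith)
  have hτ' : 1 - τ⁻¹ = -(α * ε / (1 - α)) := by rw [hτ, inv_inv]; ring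
  have hrow : (∑ j, U i j) / n / z i = a i * (∑ j, M i j * b j) / (n * z i) := by
    simp only [hU, mul_sum, div_div]
    exact congrArg (· / _) (sum_congr rfl fun j _ => by ring)
  have hlogU : log (U i j) = log (a i) + ε⁻¹ * log (F i j) + log (b j) := by
    rw [hU, log_mul (mul_pos (hapos i) (hMpos i j)).ne' (hbpos j).ne',
      log_mul (hapos i).ne' (hMpos i j).ne', hM, log_rpow (hFpos i j), one_div]
  rw [objGrad, hrow, log_mul_div_eq_of_eq_rpow (mul_pos hn (hzpos i)) hT hτ0 (ha i), hτ',
    hlogU, hC]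
  field_simp [h1α.ne']
  ring

end Sinkhorn

theorem minimizer_of_sinkhorn_fixed_point_general
    {K n : ℕ}
    (F : Fin K → Fin n → ℝ) (hFpos : ∀ i j, 0 < F i j)
    (z : Fin K → ℝ) (hzpos : ∀ i, 0 < z i)
    (α ε : ℝ) (hα0 : 0 < α) (hα1 : α < 1) (hε : 0 < ε)
    (C : Fin K → Fin n → ℝ) (hC : ∀ i j, C i j = -Real.log (F i j))
    (M : Fin K → Fin n → ℝ) (hM : ∀ i j, M i j = F i j ^ (1 / ε))
    (τ : ℝ) (hτ : τ = (1 + α * ε / (1 - α))⁻¹)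
    (a : Fin K → ℝ) (b : Fin n → ℝ)
    (hapos : ∀ i, 0 < a i) (hbpos : ∀ j, 0 < b j)
    (ha : ∀ i, a i = ((n : ℝ) * z i / (∑ j, M i j * b j)) ^ τ)
    (hb : ∀ j, b j = (∑ i, M i j * a i)⁻¹)
    (U : Fin K → Fin n → ℝ) (hU : ∀ i j, U i j = a i * M i j * b j) :
    (∀ i j, 0 < U i j) ∧ colSimplex U ∧
      (∀ V : Fin K → Fin n → ℝ, colSimplex V → V ≠ U →
        objG C z α ε U < objG C z α ε V) := by
  have hUpos i j : 0 < U i j := by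
    have := hM i j ▸ rpow_pos_of_pos (hFpos i j) (1 / ε)
    have := hapos i
    have := hbpos j
    rw [hU]
    positivity
  have hUcol j : ∑ i, U i j = 1 := by
    simp only [hU]
    exact sum_mul_mul_eq_one_of_eq_inv (hbpos j).ne' (hb j)
  refine ⟨hUpos, ⟨fun i j => (hUpos i j).le, hUcol⟩, fun V hV hne => ?_⟩
  have horth := sum_sum_mul_sub_eq_zero _
    (objGrad_eq_of_sinkhorn hFpos hzpos hα0 hα1 hε hC hM hτ hapos hbpos ha hU)
    (fun j => (hV.2 j).trans (hUcol j).symm)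
  simpa only [horth, add_zero] using
    objG_add_sum_objGrad_mul_sub_lt (C := C) hα0 hα1.le hε hzpos hUpos hV.1 hne

/-- A solution of the Sinkhorn fixed-point equations `a = (nz ⊘ Mb)^τ`,
`b = 1_n ⊘ Mᵀa` yields, via `U = diag(a) M diag(b)`, a positive feasible matrix
which is the (unique) minimizer of the entropic unbalanced OT objective. -/
theorem minimizer_of_sinkhorn_fixed_point
    {K n : ℕ} (hK : 1 ≤ K) (hn : 1 ≤ n)
    (F : Fin K → Fin n → ℝ) (hFpos : ∀ i j, 0 < F i j)
    (hFcol : ∀ j, ∑ i, F i j = 1)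
    (z : Fin K → ℝ) (hzpos : ∀ i, 0 < z i) (hzsum : ∑ i, z i = 1)
    (α ε : ℝ) (hα0 : 0 < α) (hα1 : α < 1) (hε : 0 < ε)
    (C : Fin K → Fin n → ℝ) (hC : ∀ i j, C i j = -Real.log (F i j))
    (M : Fin K → Fin n → ℝ) (hM : ∀ i j, M i j = F i j ^ (1 / ε))
    (τ : ℝ) (hτ : τ = (1 + α * ε / (1 - α))⁻¹)
    (a : Fin K → ℝ) (b : Fin n → ℝ)
    (hapos : ∀ i, 0 < a i) (hbpos : ∀ j, 0 < b j)
    (ha : ∀ i, a i = ((n : ℝ) * z i / (∑ j, M i j * b j)) ^ τ)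
    (hb : ∀ j, b j = (∑ i, M i j * a i)⁻¹)
    (U : Fin K → Fin n → ℝ) (hU : ∀ i j, U i j = a i * M i j * b j) :
    (∀ i j, 0 < U i j) ∧ colSimplex U ∧
      (∀ V : Fin K → Fin n → ℝ, colSimplex V → V ≠ U →
        objG C z α ε U < objG C z α ε V) :=
  minimizer_of_sinkhorn_fixed_point_general F hFpos z hzpos α ε hα0 hα1 hε C hC M hM τ hτ a b hapos
    hbpos ha hb U hU
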